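/- Let c₀, c₁, c₂ ∈ ℝ satisfy the constraint c₀ = −2(c₁ + 2c₂). On M define the Kepler Hamiltonian H₀(q,p) = |p|²/2 − 1/|q|, the generating function G(q,p) = (p·q)·( (c₁ + 4c₂) |p|² − 2(c₁ + 4c₂)/|q| ), and δ₁ = −4(c₁ + 3c₂). Then the identity {G, H₀} + δ₁ H₀² = c₂ |p|⁴ + c₁ |p|²/|q| + c₀/|q|² holds at every point of M. (This exhibits the first post-Newtonian correction c₂|p|⁴ + c₁|p|²/|q| + c₀/|q|² as generated from the Kepler Hamiltonian by an infinitesimal canonical transformation together with an energy redefinition.) -/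

import Mathlib

noncomputable section

/-- Squared Euclidean norm on `ℝ³`. -/
def normSq (v : Fin 3 → ℝ) : ℝ := ∑ i, v i ^ 2

/-- Euclidean norm on `ℝ³`. -/
def nrm (v : Fin 3 → ℝ) : ℝ := Real.sqrt (normSq v)

/-- Euclidean inner product `p·q`. -/
def dotP (p q : Fin 3 → ℝ) : ℝ := ∑ i, p i * q i

/-- Partial derivative `∂F/∂q^k` of a Hamiltonian function at `(q,p)`. -/
def pdQ (F : (Fin 3 → ℝ) → (Fin 3 → ℝ) → ℝ) (q p : Fin 3 → ℝ) (k : Fin 3) : ℝ :=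
  deriv (fun t => F (Function.update q k t) p) (q k)

/-- Partial derivative `∂F/∂p^k` of a Hamiltonian function at `(q,p)`. -/
def pdP (F : (Fin 3 → ℝ) → (Fin 3 → ℝ) → ℝ) (q p : Fin 3 → ℝ) (k : Fin 3) : ℝ :=
  deriv (fun t => F q (Function.update p k t)) (p k)

/-- The Hamiltonian vector field `X_F(q,p) = (∂F/∂p, −∂F/∂q)`. -/
def Xham (F : (Fin 3 → ℝ) → (Fin 3 → ℝ) → ℝ) (q p : Fin 3 → ℝ) :
    (Fin 3 → ℝ) × (Fin 3 → ℝ) :=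
  (fun k => pdP F q p k, fun k => -pdQ F q p k)


/-- The canonical Poisson bracket `{F,G} = Σ_k (∂F/∂q^k ∂G/∂p^k − ∂F/∂p^k ∂G/∂q^k)`. -/
def pbr (F G : (Fin 3 → ℝ) → (Fin 3 → ℝ) → ℝ) (q p : Fin 3 → ℝ) : ℝ :=
  ∑ k, (pdQ F q p k * pdP G q p k - pdP F q p k * pdQ G q p k)

/-- The Kepler Hamiltonian `H₀(q,p) = |p|²/2 − 1/|q|`. -/
def Hkep : (Fin 3 → ℝ) → (Fin 3 → ℝ) → ℝ := fun q p => normSq p / 2 - 1 / nrm q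

lemma normSq_update (v : Fin 3 → ℝ) (k : Fin 3) (t : ℝ) :
    normSq (Function.update v k t) = normSq v - v k ^ 2 + t ^ 2 := by
  unfold normSq
  have h : ∀ i, Function.update v k t i ^ 2 = Function.update (fun i => v i ^ 2) k (t ^ 2) i := by
    intro i; rcases eq_or_ne i k with h | h
    · subst h; simp
    · simp [Function.update_of_ne h]
  simp only [h]
  rw [Finset.sum_update_of_mem (Finset.mem_univ k)]
  have h2 := Finset.add_sum_erase Finset.univ (fun i => v i ^ 2) (Finset.mem_univ k)
  simp only [Finset.sdiff_singleton_eq_erase] at *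
  linarith

lemma dotP_update_right (p q : Fin 3 → ℝ) (k : Fin 3) (t : ℝ) :
    dotP p (Function.update q k t) = dotP p q - p k * q k + p k * t := by
  unfold dotP
  have h : ∀ i, p i * Function.update q k t i = Function.update (fun i => p i * q i) k (p k * t) i := by
    intro i; rcases eq_or_ne i k with h | h
    · subst h; simp
    · simp [Function.update_of_ne h]
  simp only [h]
  rw [Finset.sum_update_of_mem (Finset.mem_univ k)]
  have h2 := Finset.add_sum_erase Finset.univ (fun i => p i * q i) (Finset.mem_univ k)
  simp only [Finset.sdiff_singleton_eq_erase] at *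
  linarith

lemma dotP_update_left (p q : Fin 3 → ℝ) (k : Fin 3) (t : ℝ) :
    dotP (Function.update p k t) q = dotP p q - p k * q k + t * q k := by
  unfold dotP
  have h : ∀ i, Function.update p k t i * q i = Function.update (fun i => p i * q i) k (t * q k) i := by
    intro i; rcases eq_or_ne i k with h | h
    · subst h; simp
    · simp [Function.update_of_ne h]
  simp only [h]
  rw [Finset.sum_update_of_mem (Finset.mem_univ k)]
  have h2 := Finset.add_sum_erase Finset.univ (fun i => p i * q i) (Finset.mem_univ k)
  simp only [Finset.sdiff_singleton_eq_erase] at *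
  linarith

lemma normSq_pos (q : Fin 3 → ℝ) (hq : q ≠ 0) : 0 < normSq q := by
  obtain ⟨i, hi⟩ := Function.ne_iff.mp hq
  have h1 : q i ^ 2 ≤ normSq q := by
    apply Finset.single_le_sum (f := fun j => q j ^ 2) (fun j _ => sq_nonneg _) (Finset.mem_univ i)
  have hi' : q i ≠ 0 := by simpa using hi
  have : 0 < q i ^ 2 := by positivity
  linarith

lemma hasDerivAt_sqrtShift (c x : ℝ) (h : 0 < c + x ^ 2) :
    HasDerivAt (fun t => Real.sqrt (c + t ^ 2)) (x / Real.sqrt (c + x ^ 2)) x := by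
  have h1 : HasDerivAt (fun t : ℝ => c + t ^ 2) (2 * x) x := by
    simpa using ((hasDerivAt_pow 2 x).const_add c)
  have h2 := (Real.hasDerivAt_sqrt (ne_of_gt h)).comp x h1
  have hs : Real.sqrt (c + x ^ 2) ≠ 0 := by positivity
  refine h2.congr_deriv ?_
  field_simp

lemma hasDerivAt_invSqrtShift (c x : ℝ) (h : 0 < c + x ^ 2) :
    HasDerivAt (fun t => (Real.sqrt (c + t ^ 2))⁻¹)
      (-(x / (Real.sqrt (c + x ^ 2) * (c + x ^ 2)))) x := by
  have hs : Real.sqrt (c + x ^ 2) ≠ 0 := by positivity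
  have h2 := (hasDerivAt_sqrtShift c x h).inv hs
  refine h2.congr_deriv ?_
  rw [Real.sq_sqrt (le_of_lt h)]
  field_simp

lemma cplus (q : Fin 3 → ℝ) (k : Fin 3) : normSq q - q k ^ 2 + q k ^ 2 = normSq q := by ring

lemma pdP_Hkep (q p : Fin 3 → ℝ) (k : Fin 3) : pdP Hkep q p k = p k := by
  unfold pdP Hkep
  have hfun : (fun t => normSq (Function.update p k t) / 2 - 1 / nrm q)
      = fun t => (normSq p - p k ^ 2 + t ^ 2) / 2 - 1 / nrm q := by
    funext t; rw [normSq_update]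
  rw [hfun]
  have h : HasDerivAt (fun t : ℝ => (normSq p - p k ^ 2 + t ^ 2) / 2 - 1 / nrm q) (p k) (p k) := by
    have h1 : HasDerivAt (fun t : ℝ => normSq p - p k ^ 2 + t ^ 2) (2 * p k) (p k) := by
      simpa using ((hasDerivAt_pow 2 (p k)).const_add (normSq p - p k ^ 2))
    have := (h1.div_const 2).sub_const (1 / nrm q)
    refine this.congr_deriv ?_; ring
  exact h.deriv

lemma pdQ_Hkep (q p : Fin 3 → ℝ) (hq : q ≠ 0) (k : Fin 3) :
    pdQ Hkep q p k = q k / nrm q ^ 3 := by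
  have hpos' : 0 < normSq q := normSq_pos q hq
  have hpos : 0 < (normSq q - q k ^ 2) + q k ^ 2 := by rw [cplus]; exact hpos'
  unfold pdQ Hkep
  have hfun : (fun t => normSq p / 2 - 1 / nrm (Function.update q k t))
      = fun t => normSq p / 2 - (Real.sqrt (normSq q - q k ^ 2 + t ^ 2))⁻¹ := by
    funext t; rw [nrm, normSq_update, one_div]
  rw [hfun]
  have h := ((hasDerivAt_invSqrtShift (normSq q - q k ^ 2) (q k) hpos).const_sub
      (normSq p / 2))
  rw [h.deriv, cplus]
  have hr : nrm q = Real.sqrt (normSq q) := rfl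
  have hr2 : nrm q ^ 2 = normSq q := Real.sq_sqrt (le_of_lt hpos')
  have hrpos : 0 < nrm q := Real.sqrt_pos.mpr hpos'
  rw [← hr, ← hr2]
  ring

lemma pdQ_G (a : ℝ) (q p : Fin 3 → ℝ) (hq : q ≠ 0) (k : Fin 3) :
    pdQ (fun q p => dotP p q * (a * normSq p - 2 * a / nrm q)) q p k
      = p k * (a * normSq p - 2 * a / nrm q)
        + dotP p q * (2 * a * q k / nrm q ^ 3) := by
  have hpos' : 0 < normSq q := normSq_pos q hq
  have hpos : 0 < (normSq q - q k ^ 2) + q k ^ 2 := by rw [cplus]; exact hpos'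
  have hr2 : nrm q ^ 2 = normSq q := Real.sq_sqrt (le_of_lt hpos')
  have hrpos : 0 < nrm q := Real.sqrt_pos.mpr hpos'
  unfold pdQ
  have hfun : (fun t => dotP p (Function.update q k t)
        * (a * normSq p - 2 * a / nrm (Function.update q k t)))
      = fun t => (dotP p q - p k * q k + p k * t)
        * (a * normSq p - 2 * a * (Real.sqrt (normSq q - q k ^ 2 + t ^ 2))⁻¹) := by
    funext t
    rw [dotP_update_right, nrm, normSq_update, div_eq_mul_inv]
  rw [hfun]
  have h1 : HasDerivAt (fun t : ℝ => dotP p q - p k * q k + p k * t) (p k) (q k) := by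
    simpa using ((hasDerivAt_id (q k)).const_mul (p k)).const_add (dotP p q - p k * q k)
  have h2 : HasDerivAt (fun t : ℝ => a * normSq p
        - 2 * a * (Real.sqrt (normSq q - q k ^ 2 + t ^ 2))⁻¹)
      (-(2 * a * (-(q k / (Real.sqrt (normSq q - q k ^ 2 + q k ^ 2)
          * (normSq q - q k ^ 2 + q k ^ 2)))))) (q k) :=
    ((hasDerivAt_invSqrtShift (normSq q - q k ^ 2) (q k) hpos).const_mul
      (2 * a)).const_sub (a * normSq p)
  rw [(h1.fun_mul h2).deriv, cplus]
  have hr : Real.sqrt (normSq q) = nrm q := rfl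
  rw [hr, ← hr2]
  have hrne : nrm q ≠ 0 := ne_of_gt hrpos
  field_simp
  ring

lemma pdP_G (a : ℝ) (q p : Fin 3 → ℝ) (hq : q ≠ 0) (k : Fin 3) :
    pdP (fun q p => dotP p q * (a * normSq p - 2 * a / nrm q)) q p k
      = q k * (a * normSq p - 2 * a / nrm q) + dotP p q * (2 * a * p k) := by
  unfold pdP
  have hfun : (fun t => dotP (Function.update p k t) q
        * (a * normSq (Function.update p k t) - 2 * a / nrm q))
      = fun t => (dotP p q - p k * q k + t * q k)
        * (a * (normSq p - p k ^ 2 + t ^ 2) - 2 * a / nrm q) := by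
    funext t
    rw [dotP_update_left, normSq_update]
  rw [hfun]
  have h1 : HasDerivAt (fun t : ℝ => dotP p q - p k * q k + t * q k) (q k) (p k) := by
    simpa using ((hasDerivAt_id (p k)).mul_const (q k)).const_add (dotP p q - p k * q k)
  have h2 : HasDerivAt (fun t : ℝ => a * (normSq p - p k ^ 2 + t ^ 2) - 2 * a / nrm q)
      (a * (2 * p k)) (p k) := by
    have hi : HasDerivAt (fun t : ℝ => normSq p - p k ^ 2 + t ^ 2) (2 * p k) (p k) := by
      simpa using ((hasDerivAt_pow 2 (p k)).const_add (normSq p - p k ^ 2))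
    exact (hi.const_mul a).sub_const (2 * a / nrm q)
  rw [(h1.fun_mul h2).deriv]
  ring

/-- if `c₀ = −2(c₁ + 2c₂)`, then with the generating function
`G = (p·q)((c₁+4c₂)|p|² − 2(c₁+4c₂)/|q|)` and `δ₁ = −4(c₁+3c₂)`, the identity
`{G, H₀} + δ₁ H₀² = c₂|p|⁴ + c₁|p|²/|q| + c₀/|q|²` holds at every point of
`M = (ℝ³∖{0}) × ℝ³`. -/
theorem first_PN_correction_from_Kepler (c₀ c₁ c₂ : ℝ) (hc : c₀ = -2 * (c₁ + 2 * c₂)) :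
    ∀ q p : Fin 3 → ℝ, q ≠ 0 →
      pbr (fun q p => dotP p q * ((c₁ + 4 * c₂) * normSq p - 2 * (c₁ + 4 * c₂) / nrm q))
          Hkep q p
          + (-4 * (c₁ + 3 * c₂)) * (Hkep q p) ^ 2
        = c₂ * (normSq p) ^ 2 + c₁ * normSq p / nrm q + c₀ / (nrm q) ^ 2 := by
  intro q p hq
  set a : ℝ := c₁ + 4 * c₂ with ha
  have hpos' : 0 < normSq q := normSq_pos q hq
  have hr2 : nrm q ^ 2 = normSq q := Real.sq_sqrt hpos'.le
  have hrpos : 0 < nrm q := Real.sqrt_pos.mpr hpos'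
  have hrne : nrm q ≠ 0 := ne_of_gt hrpos
  set E : ℝ := a * normSq p - 2 * a / nrm q with hE
  have hpbr : pbr (fun q p => dotP p q * (a * normSq p - 2 * a / nrm q)) Hkep q p
      = E * normSq p - E / nrm q ^ 3 * normSq q := by
    unfold pbr
    have hstep : ∀ k ∈ Finset.univ,
        pdQ (fun q p => dotP p q * (a * normSq p - 2 * a / nrm q)) q p k
            * pdP Hkep q p k
          - pdP (fun q p => dotP p q * (a * normSq p - 2 * a / nrm q)) q p k
            * pdQ Hkep q p k
        = E * p k ^ 2 - E / nrm q ^ 3 * q k ^ 2 := by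
      intro k _
      rw [pdQ_G a q p hq k, pdP_G a q p hq k, pdQ_Hkep q p hq k, pdP_Hkep q p k, hE]
      field_simp
      ring
    rw [Finset.sum_congr rfl hstep, Finset.sum_sub_distrib, ← Finset.mul_sum,
      ← Finset.mul_sum]
    rfl
  rw [hpbr, hE, Hkep, ← hr2, hc, ha]
  field_simp
  ring


end
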